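/- Let α be a positive odd integer and p ≥ α + 3 a prime. Then Σ_{1 ≤ l < 2p, l ≠ p} 1/l^α ≡ 0 (mod p²), where the sum, taken over integers l with 1 ≤ l < 2p and l coprime to p, is computed in ℤ/p²ℤ. -/

import Mathlib

/-!
Pair `l` with `2p - l`. Since `(2p)² = 0` in `ℤ/p²`, `(2p - l)⁻¹ = -(l⁻¹ + 2p l⁻²)`, so for odd
`α` the pair contributes `-2αp l^{-(α+1)}` and the whole sum is `-2αp ∑_{0<l<p} l^{-(α+1)}`. This
vanishes because `∑_{0<l<p} l^{-(α+1)} ≡ 0 (mod p)`: the inverses run over `𝔽_p^×` and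
`0 < α + 1 < p - 1`.
-/

open Finset

theorem add_pow_of_sq_eq_zero {R : Type*} [CommRing R] (x : R) {c : R} (hc : c ^ 2 = 0) (n : ℕ) :
    (x + c) ^ n = x ^ n + n * x ^ (n - 1) * c := by
  simpa [Polynomial.derivative_X_pow] using
    Polynomial.eval_add_of_sq_eq_zero (Polynomial.X ^ n) x c hc

theorem Finset.sum_Ico_filter_ne_eq_sum_add_reflect {M : Type*} [AddCommMonoid M] (f : ℕ → M)
    (p : ℕ) :
    ∑ l ∈ (Ico 1 (2 * p)).filter (· ≠ p), f l = ∑ l ∈ Ico 1 p, (f l + f (2 * p - l)) := by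
  have hsplit : (Ico 1 (2 * p)).filter (· ≠ p) = Ico 1 p ∪ Ico (p + 1) (2 * p) := by
    ext l; simp only [mem_filter, mem_Ico, mem_union]; omega
  have hdisj : Disjoint (Ico 1 p) (Ico (p + 1) (2 * p)) :=
    disjoint_left.mpr fun l h₁ h₂ => by simp only [mem_Ico] at h₁ h₂; omega
  have hreflect : ∑ l ∈ Ico (p + 1) (2 * p), f l = ∑ l ∈ Ico 1 p, f (2 * p - l) := by
    refine sum_nbij' (2 * p - ·) (2 * p - ·) ?_ ?_ ?_ ?_ ?_ <;> intro l hl <;>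
      simp only [mem_Ico] at hl ⊢ <;> first | omega | congr 1; omega
  rw [hsplit, sum_union hdisj, hreflect, sum_add_distrib]

namespace ZMod

theorem inv_sub_of_sq_eq_zero {n : ℕ} {c x : ZMod n} (hc : c ^ 2 = 0) (hx : IsUnit x) :
    (c - x)⁻¹ = -(x⁻¹ + c * x⁻¹ ^ 2) := by
  refine ZMod.inv_eq_of_mul_eq_one _ _ _ ?_
  linear_combination (1 + c * x⁻¹) * mul_inv_of_unit x hx - x⁻¹ ^ 2 * hc

theorem inv_pow_of_isUnit {n : ℕ} {x : ZMod n} (hx : IsUnit x) (k : ℕ) : (x ^ k)⁻¹ = x⁻¹ ^ k := by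
  obtain ⟨u, rfl⟩ := hx
  rw [← Units.val_pow_eq_pow_val, inv_coe_unit, inv_coe_unit, ← Units.val_pow_eq_pow_val, inv_pow]

theorem inv_sub_pow_add_inv_pow {n : ℕ} {c x : ZMod n} (hc : c ^ 2 = 0) (hx : IsUnit x) {α : ℕ}
    (hα : Odd α) : ((c - x) ^ α)⁻¹ + (x ^ α)⁻¹ = -(α * c * x⁻¹ ^ (α + 1)) := by
  have hcx : IsUnit (c - x) := sub_eq_add_neg c x ▸
    IsNilpotent.isUnit_add_right_of_commute ⟨2, hc⟩ hx.neg (Commute.all _ _)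
  have hc' : (c * x⁻¹ ^ 2) ^ 2 = 0 := by rw [mul_pow, hc, zero_mul]
  rw [inv_pow_of_isUnit hcx, inv_pow_of_isUnit hx, inv_sub_of_sq_eq_zero hc hx, hα.neg_pow,
    add_pow_of_sq_eq_zero _ hc']
  obtain ⟨k, rfl⟩ := hα
  simp only [add_tsub_cancel_right]
  ring

theorem castHom_inv_of_isUnit {m n : ℕ} (h : m ∣ n) {x : ZMod n} (hx : IsUnit x) :
    castHom h (ZMod m) x⁻¹ = (castHom h (ZMod m) x)⁻¹ :=
  (ZMod.inv_eq_of_mul_eq_one _ _ _ (by rw [← map_mul, mul_inv_of_unit x hx, map_one])).symm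

theorem natCast_mul_eq_zero_of_castHom_eq_zero {p : ℕ} {x : ZMod (p ^ 2)}
    (hx : castHom (dvd_pow_self p two_ne_zero) (ZMod p) x = 0) : (p : ZMod (p ^ 2)) * x = 0 := by
  rcases p.eq_zero_or_pos with rfl | hp
  · simp
  have : NeZero (p ^ 2) := ⟨by positivity⟩
  obtain ⟨y, rfl⟩ := ZMod.natCast_zmod_surjective x
  rw [map_natCast, ZMod.natCast_eq_zero_iff] at hx
  rw [← Nat.cast_mul, ZMod.natCast_eq_zero_iff, pow_two]
  exact mul_dvd_mul_left p hx

theorem sum_Ico_inv_pow_eq_zero (p : ℕ) [Fact p.Prime] {k : ℕ} (hk : 0 < k) (hkp : k < p - 1) :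
    ∑ l ∈ Ico 1 p, (l : ZMod p)⁻¹ ^ k = 0 := by
  have hrange : ∑ l ∈ range p, (l : ZMod p)⁻¹ ^ k = ∑ x : ZMod p, x⁻¹ ^ k := by
    refine sum_nbij' (Nat.cast) val (fun _ _ => mem_univ _) (fun x _ => mem_range.mpr x.val_lt)
      (fun l hl => val_natCast_of_lt (mem_range.mp hl)) (fun x _ => natCast_zmod_val x)
      fun _ _ => rfl
  have hinv : ∑ x : ZMod p, x⁻¹ ^ k = ∑ x : ZMod p, x ^ k :=
    Fintype.sum_bijective _ inv_involutive.bijective _ _ fun _ => rfl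
  rw [range_eq_Ico, sum_eq_sum_Ico_succ_bot (Fact.out : p.Prime).pos, Nat.cast_zero, inv_zero,
    zero_pow hk.ne', zero_add, hinv] at hrange
  rw [hrange]
  exact FiniteField.sum_pow_lt_card_sub_one (K := ZMod p) k (by rwa [ZMod.card])

end ZMod

theorem stmt9_general (p α : ℕ) (hp : p.Prime) (hodd : Odd α) (hpα : α + 3 ≤ p) :
    (∑ l ∈ (Finset.Ico 1 (2 * p)).filter (fun l => l ≠ p),
      ((l : ZMod (p ^ 2)) ^ α)⁻¹) = 0 := by
  have : Fact p.Prime := ⟨hp⟩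
  have hunit : ∀ l ∈ Ico 1 p, IsUnit (l : ZMod (p ^ 2)) := fun l hl => by
    obtain ⟨h₁, h₂⟩ := mem_Ico.mp hl
    exact (ZMod.isUnit_iff_coprime l _).mpr
      ((Nat.coprime_of_lt_prime (by omega) h₂ hp).pow_left 2).symm
  have hc : (2 * p : ZMod (p ^ 2)) ^ 2 = 0 := by
    rw [mul_pow, ← Nat.cast_pow, ZMod.natCast_self, mul_zero]
  have hpair : ∀ l ∈ Ico 1 p, ((l : ZMod (p ^ 2)) ^ α)⁻¹ + (((2 * p - l : ℕ) : ZMod (p ^ 2)) ^ α)⁻¹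
      = p * (-(2 * α) * (l : ZMod (p ^ 2))⁻¹ ^ (α + 1)) := fun l hl => by
    rw [Nat.cast_sub (by linarith [mem_Ico.mp hl]), add_comm, Nat.cast_mul, Nat.cast_two,
      ZMod.inv_sub_pow_add_inv_pow hc (hunit l hl) hodd]
    ring
  have hmod : ZMod.castHom (dvd_pow_self p two_ne_zero) (ZMod p)
      (∑ l ∈ Ico 1 p, (l : ZMod (p ^ 2))⁻¹ ^ (α + 1)) = 0 := by
    rw [map_sum, ← ZMod.sum_Ico_inv_pow_eq_zero p (k := α + 1) (by omega) (by omega)]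
    refine sum_congr rfl fun l hl => ?_
    rw [map_pow, ZMod.castHom_inv_of_isUnit _ (hunit l hl), map_natCast]
  rw [Finset.sum_Ico_filter_ne_eq_sum_add_reflect, sum_congr rfl hpair, ← mul_sum, ← mul_sum,
    mul_left_comm, ZMod.natCast_mul_eq_zero_of_castHom_eq_zero hmod, mul_zero]

theorem stmt9 (p α : ℕ) (hp : p.Prime) (hα : 0 < α) (hodd : Odd α) (hpα : α + 3 ≤ p) :
    (∑ l ∈ (Finset.Ico 1 (2 * p)).filter (fun l => l ≠ p),
      ((l : ZMod (p ^ 2)) ^ α)⁻¹) = 0 :=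
  stmt9_general p α hp hodd hpα
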